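/- Let f : [0,1] → 2^[0,1] be an upper semicontinuous set-valued function (with nonempty compact values) whose graph G(f) = {(x,y) : y ∈ f(x)} is connected. Then for all 0 ≤ a ≤ b ≤ 1 there exists a connected compact subset C of G(f) ∩ ([a,b] × [0,1]) such that C intersects {a} × [0,1] and C intersects {b} × [0,1]. -/

import Mathlib

open Set

/-- Graph of a set-valued function on [0,1]. -/
def SVGraph (f : ℝ → Set ℝ) : Set (ℝ × ℝ) :=
  {p | p.1 ∈ Icc (0:ℝ) 1 ∧ p.2 ∈ f p.1}

/-- f has nonempty compact values contained in [0,1]. -/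
def SV (f : ℝ → Set ℝ) : Prop :=
  ∀ x ∈ Icc (0:ℝ) 1, (f x).Nonempty ∧ IsCompact (f x) ∧ f x ⊆ Icc (0:ℝ) 1

/-- Upper semicontinuity on [0,1]. -/
def USC (f : ℝ → Set ℝ) : Prop :=
  ∀ x ∈ Icc (0:ℝ) 1, ∀ U : Set ℝ, IsOpen U → f x ⊆ U →
    ∃ V : Set ℝ, IsOpen V ∧ x ∈ V ∧ ∀ v ∈ V ∩ Icc (0:ℝ) 1, f v ⊆ U

/-- Weak Intermediate Value Property. -/
def WIVP (f : ℝ → Set ℝ) : Prop :=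
  ∀ x₁ ∈ Icc (0:ℝ) 1, ∀ x₂ ∈ Icc (0:ℝ) 1, x₁ ≠ x₂ → ∀ y₁ ∈ f x₁,
    ∃ y₂ ∈ f x₂, ∀ y ∈ uIcc y₁ y₂, ∃ x ∈ uIcc x₁ x₂, y ∈ f x

/-- Intermediate Value Property. -/
def IVP (f : ℝ → Set ℝ) : Prop :=
  ∀ x₁ ∈ Icc (0:ℝ) 1, ∀ x₂ ∈ Icc (0:ℝ) 1, x₁ ≠ x₂ → ∀ y₁ ∈ f x₁, ∀ y₂ ∈ f x₂, y₁ ≠ y₂ →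
    ∀ y ∈ Ioo (min y₁ y₂) (max y₁ y₂), ∃ x ∈ Ioo (min x₁ x₂) (max x₁ x₂), y ∈ f x

/-!
Let `K` be the part of the graph over `[a, b]`; it is compact. If no component of `K` met both
walls `x = a` and `x = b`, then, passing to the totally disconnected space of components of `K`,
some clopen subset `W` of `K` would contain the wall `x = a` and miss the wall `x = b`. Gluing `W`
to the part of the graph over `x ≤ a`, and `K \ W` to the part over `x ≥ b`, splits the graph into
two disjoint nonempty closed sets, contradicting connectedness.
-/

theorem exists_isClopen_of_disjoint_connectedComponent {X : Type*} [TopologicalSpace X]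
    [CompactSpace X] [T2Space X] {A B : Set X} (hA : IsClosed A) (hB : IsClosed B)
    (hAB : ∀ x ∈ A, Disjoint (connectedComponent x) B) :
    ∃ W : Set X, IsClopen W ∧ A ⊆ W ∧ Disjoint W B := by
  let π : X → ConnectedComponents X := ConnectedComponents.mk
  have hπ : Continuous π := ConnectedComponents.continuous_coe
  have hAB' : π '' A ⊆ (π '' B)ᶜ := by
    rintro _ ⟨x, hx, rfl⟩ ⟨y, hy, hyx⟩
    exact disjoint_left.1 (hAB x hx) (ConnectedComponents.coe_eq_coe'.1 hyx) hy
  obtain ⟨C, hC, hAC, hCB⟩ := exists_clopen_of_closed_subset_open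
    (hA.isCompact.image hπ).isClosed (hB.isCompact.image hπ).isClosed.isOpen_compl hAB'
  refine ⟨π ⁻¹' C, hC.preimage hπ, image_subset_iff.1 hAC, disjoint_left.2 fun x hxC hxB => ?_⟩
  exact hCB hxC (mem_image_of_mem π hxB)

theorem IsCompact.connectedComponentIn {X : Type*} [TopologicalSpace X] {K : Set X}
    (hK : IsCompact K) (x : X) : IsCompact (connectedComponentIn K x) := by
  by_cases hx : x ∈ K
  · have : CompactSpace K := isCompact_iff_compactSpace.1 hK
    rw [connectedComponentIn_eq_image hx]
    exact isClosed_connectedComponent.isCompact.image continuous_subtype_val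
  · rw [connectedComponentIn_eq_empty hx]
    exact isCompact_empty

section Strip

variable {X : Type*} [TopologicalSpace X] {φ : X → ℝ} {S : Set X} {a b : ℝ}

theorem IsPreconnected.inter_level_nonempty_of_strip_clopen (hS : IsPreconnected S)
    (hSc : IsClosed S) (hφ : Continuous φ) (hab : a ≤ b) (h₀ : ∃ x ∈ S, φ x ≤ a)
    (h₁ : ∃ x ∈ S, b ≤ φ x) {W : Set X} (hWK : W ⊆ S ∩ φ ⁻¹' Icc a b) (hW : IsClosed W)
    (hKW : IsClosed ((S ∩ φ ⁻¹' Icc a b) \ W)) (haW : S ∩ φ ⁻¹' {a} ⊆ W) :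
    (W ∩ φ ⁻¹' {b}).Nonempty := by
  by_contra hWb
  obtain ⟨x₀, hx₀S, hx₀⟩ := h₀
  obtain ⟨x₁, hx₁S, hx₁⟩ := h₁
  have hcover : S ⊆ (S ∩ φ ⁻¹' Iic a ∪ W) ∪ ((S ∩ φ ⁻¹' Icc a b) \ W ∪ S ∩ φ ⁻¹' Ici b) := by
    intro x hxS
    rcases le_or_gt (φ x) a with hxa | hxa
    · exact Or.inl (Or.inl ⟨hxS, hxa⟩)
    rcases le_or_gt b (φ x) with hxb | hxb
    · exact Or.inr (Or.inr ⟨hxS, hxb⟩)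
    by_cases hxW : x ∈ W
    · exact Or.inl (Or.inr hxW)
    · exact Or.inr (Or.inl ⟨⟨hxS, hxa.le, hxb.le⟩, hxW⟩)
  obtain ⟨x, -, hx₀, hx₁⟩ := isPreconnected_closed_iff.1 hS _ _
    ((hSc.inter (isClosed_Iic.preimage hφ)).union hW)
    (hKW.union (hSc.inter (isClosed_Ici.preimage hφ))) hcover
    ⟨x₀, hx₀S, Or.inl ⟨hx₀S, hx₀⟩⟩ ⟨x₁, hx₁S, Or.inr ⟨hx₁S, hx₁⟩⟩
  rcases hx₀ with ⟨hxS, hxa⟩ | hxW <;> rcases hx₁ with ⟨⟨hxS', hxI⟩, hxW'⟩ | ⟨hxS', hxb⟩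
  · exact hxW' (haW ⟨hxS, le_antisymm hxa hxI.1⟩)
  · exact hWb ⟨x, haW ⟨hxS, le_antisymm hxa (hab.trans hxb)⟩, le_antisymm (hxa.trans hab) hxb⟩
  · exact hxW' hxW
  · exact hWb ⟨x, hxW, le_antisymm (hWK hxW).2.2 hxb⟩

theorem exists_connectedComponentIn_strip_of_isPreconnected [T2Space X]
    (hS : IsPreconnected S) (hSc : IsClosed S) (hφ : Continuous φ) (hab : a ≤ b)
    (hK : IsCompact (S ∩ φ ⁻¹' Icc a b)) (h₀ : ∃ x ∈ S, φ x ≤ a) (h₁ : ∃ x ∈ S, b ≤ φ x) :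
    ∃ p ∈ S ∩ φ ⁻¹' Icc a b, φ p = a ∧
      (connectedComponentIn (S ∩ φ ⁻¹' Icc a b) p ∩ φ ⁻¹' {b}).Nonempty := by
  set K := S ∩ φ ⁻¹' Icc a b
  have : CompactSpace K := isCompact_iff_compactSpace.1 hK
  have hφK : Continuous fun p : K => φ p := hφ.comp continuous_subtype_val
  by_contra! hnone
  obtain ⟨W, hW, haW, hWb⟩ := exists_isClopen_of_disjoint_connectedComponent
    (isClosed_eq hφK continuous_const) (isClosed_eq hφK continuous_const)
    (A := {p : K | φ p = a}) (B := {p : K | φ p = b}) fun p hpa => by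
      have h := hnone p p.2 hpa
      rw [connectedComponentIn_eq_image p.2] at h
      exact disjoint_left.2 fun q hq hqb => h.subset ⟨mem_image_of_mem _ hq, hqb⟩
  have hval : IsClosedMap (Subtype.val : K → X) := hK.isClosed.isClosedMap_subtype_val
  obtain ⟨_, ⟨q, hqW, rfl⟩, hqb⟩ := hS.inter_level_nonempty_of_strip_clopen hSc hφ hab h₀ h₁
    (W := Subtype.val '' W) (image_subset_iff.2 fun p _ => p.2) (hval _ hW.isClosed)
    (by rw [← image_val_compl]; exact hval _ hW.isOpen.isClosed_compl)
    fun x hx => ⟨⟨x, hx.1, by rw [mem_preimage, hx.2]; exact left_mem_Icc.2 hab⟩, haW hx.2, rfl⟩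
  exact disjoint_left.1 hWb hqW hqb

end Strip

theorem isClosed_SVGraph {f : ℝ → Set ℝ} (hSV : SV f) (husc : USC f) :
    IsClosed (SVGraph f) := by
  refine isOpen_compl_iff.1 (isOpen_iff_mem_nhds.2 ?_)
  rintro ⟨x, y⟩ hxy
  by_cases hx : x ∈ Icc (0:ℝ) 1
  · obtain ⟨U, V, hU, hV, hfU, hyV, hUV⟩ := SeparatedNhds.of_isCompact_isCompact
      (hSV x hx).2.1 isCompact_singleton (disjoint_singleton_right.2 fun hy => hxy ⟨hx, hy⟩)
    obtain ⟨O, hO, hxO, hOU⟩ := husc x hx U hU hfU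
    filter_upwards [prod_mem_nhds (hO.mem_nhds hxO) (hV.mem_nhds (hyV rfl))] with q hq hqG
    exact disjoint_left.1 hUV (hOU q.1 ⟨hq.1, hqG.1⟩ hqG.2) hq.2
  · filter_upwards [(isClosed_Icc.preimage continuous_fst).isOpen_compl.mem_nhds hx]
      with q hq hqG using hq hqG.1

theorem stmt0 (f : ℝ → Set ℝ) (hSV : SV f) (husc : USC f)
    (hconn : IsConnected (SVGraph f)) :
    ∀ a b : ℝ, 0 ≤ a → a ≤ b → b ≤ 1 →
      ∃ C : Set (ℝ × ℝ), C ⊆ SVGraph f ∩ Icc a b ×ˢ Icc (0:ℝ) 1 ∧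
        IsConnected C ∧ IsCompact C ∧
        (C ∩ {p : ℝ × ℝ | p.1 = a}).Nonempty ∧
        (C ∩ {p : ℝ × ℝ | p.1 = b}).Nonempty := by
  intro a b ha hab hb
  have haI : a ∈ Icc (0:ℝ) 1 := ⟨ha, hab.trans hb⟩
  have hbI : b ∈ Icc (0:ℝ) 1 := ⟨ha.trans hab, hb⟩
  have hGc : IsClosed (SVGraph f) := isClosed_SVGraph hSV husc
  have hstrip : SVGraph f ∩ Icc a b ×ˢ Icc (0:ℝ) 1 = SVGraph f ∩ Prod.fst ⁻¹' Icc a b := by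
    ext p
    exact ⟨fun hp => ⟨hp.1, hp.2.1⟩, fun hp => ⟨hp.1, hp.2, (hSV p.1 hp.1.1).2.2 hp.1.2⟩⟩
  have hK : IsCompact (SVGraph f ∩ Prod.fst ⁻¹' Icc a b) :=
    hstrip ▸ (isCompact_Icc.prod isCompact_Icc).inter_left hGc
  obtain ⟨ya, hya⟩ := (hSV a haI).1
  obtain ⟨yb, hyb⟩ := (hSV b hbI).1
  obtain ⟨p, hpK, hpa, hpb⟩ := exists_connectedComponentIn_strip_of_isPreconnected
    hconn.isPreconnected hGc continuous_fst hab hK ⟨(a, ya), ⟨haI, hya⟩, le_rfl⟩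
    ⟨(b, yb), ⟨hbI, hyb⟩, le_rfl⟩
  rw [hstrip]
  exact ⟨_, connectedComponentIn_subset _ _, isConnected_connectedComponentIn_iff.2 hpK,
    hK.connectedComponentIn p, ⟨p, mem_connectedComponentIn hpK, hpa⟩, hpb⟩
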